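/- arXiv:0803.4121 — 5 statements merged into one kernel-verified Lean document; each statement's English description precedes it below -/
import Mathlib

section
/- The divided difference operators on ℤ[x₁,...,x_m] satisfy the braid relation ∂_a ∂_{a+1} ∂_a = ∂_{a+1} ∂_a ∂_{a+1} for 1 ≤ a ≤ m-2. -/
open MvPolynomial

/-!
Multiply `∂_a ∂_{a+1} ∂_a f` by `Δ = (x_a - x_{a+1})(x_{a+1} - x_{a+2})(x_a - x_{a+2})`. Peeling
off one factor per operator, using that `∂_a g` is `s_a`-symmetric and that `s_a`, `s_{a+1}`
permute the factors of `Δ` up to sign, gives the antisymmetrization `∑_{w ∈ S₃} sgn(w) w f`.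
The same computation for `∂_{a+1} ∂_a ∂_{a+1} f` gives the same sum because
`s_a s_{a+1} s_a = s_{a+1} s_a s_{a+1}`, and `Δ` is not a zero divisor.
-/

namespace MvPolynomial

variable {σ R : Type*} [CommRing R]

theorem X_sub_X_ne_zero [Nontrivial R] {p q : σ} (hpq : p ≠ q) :
    (X p - X q : MvPolynomial σ R) ≠ 0 :=
  sub_ne_zero.mpr (X_injective.ne hpq)

variable [DecidableEq σ]

def IsDividedDifference (p q : σ) (D : MvPolynomial σ R → MvPolynomial σ R) : Prop :=
  ∀ f, (X p - X q) * D f = f - rename (Equiv.swap p q) f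

/-- `∑_{w ∈ S₃} sgn(w) w f` for the symmetric group generated by the transpositions `s` and `t`. -/
noncomputable def antisymmetrize (s t : Equiv.Perm σ) (f : MvPolynomial σ R) :
    MvPolynomial σ R :=
  f - rename s f - rename t f + rename s (rename t f) + rename t (rename s f) -
    rename s (rename t (rename s f))

theorem antisymmetrize_swap_comm {p q r : σ} (hpq : p ≠ q) (hqr : q ≠ r) (hpr : p ≠ r)
    (f : MvPolynomial σ R) :
    antisymmetrize (Equiv.swap p q) (Equiv.swap q r) f =
      antisymmetrize (Equiv.swap q r) (Equiv.swap p q) f := by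
  have braid : Equiv.swap p q * Equiv.swap q r * Equiv.swap p q =
      Equiv.swap q r * Equiv.swap p q * Equiv.swap q r := by
    rw [Equiv.swap_mul_swap_mul_swap hpq hpr, Equiv.swap_comm p q, Equiv.swap_comm q r,
      Equiv.swap_mul_swap_mul_swap hqr.symm hpr.symm, Equiv.swap_comm]
  have hsts : rename (Equiv.swap p q) (rename (Equiv.swap q r) (rename (Equiv.swap p q) f)) =
      rename (Equiv.swap q r) (rename (Equiv.swap p q) (rename (Equiv.swap q r) f)) := by
    simp only [rename_rename, ← Equiv.Perm.coe_mul, ← mul_assoc, braid]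
  unfold antisymmetrize
  linear_combination -hsts

namespace IsDividedDifference

variable {p q r : σ} {D E : MvPolynomial σ R → MvPolynomial σ R}

theorem neg (hD : IsDividedDifference p q D) : IsDividedDifference q p (-D) := by
  intro f
  rw [Equiv.swap_comm, ← hD f, Pi.neg_apply]
  ring

theorem rename_swap_apply [IsDomain R] (hpq : p ≠ q) (hD : IsDividedDifference p q D)
    (f : MvPolynomial σ R) : rename (Equiv.swap p q) (D f) = D f := by
  have h := congrArg (rename (Equiv.swap p q)) (hD f)
  simp only [map_mul, map_sub, rename_X, Equiv.swap_apply_left, Equiv.swap_apply_right,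
    rename_leftInverse (Equiv.swap_apply_self p q) f] at h
  refine mul_left_cancel₀ (X_sub_X_ne_zero hpq) ?_
  linear_combination -h - hD f

theorem vandermonde_mul_apply_eq_antisymmetrize [IsDomain R]
    (hpq : p ≠ q) (hqr : q ≠ r) (hpr : p ≠ r)
    (hD : IsDividedDifference p q D) (hE : IsDividedDifference q r E) (f : MvPolynomial σ R) :
    (X p - X q) * (X q - X r) * (X p - X r) * D (E (D f)) =
      antisymmetrize (Equiv.swap p q) (Equiv.swap q r) f := by
  have hg1 := hD f
  have hg2 := hE (D f)
  have hg3 := hD (E (D f))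
  have hsym := hD.rename_swap_apply hpq f
  set s := Equiv.swap p q
  set t := Equiv.swap q r
  have hsr : s r = r := Equiv.swap_apply_of_ne_of_ne hpr.symm hqr.symm
  have htp : t p = p := Equiv.swap_apply_of_ne_of_ne hpq hpr
  have hsg2 : (X p - X r) * rename s (E (D f)) = D f - rename s (rename t (D f)) := by
    have h := congrArg (rename s) hg2
    simp only [map_mul, map_sub, rename_X, hsr, hsym] at h
    rwa [Equiv.swap_apply_right] at h
  have htg1 : (X p - X r) * rename t (D f) = rename t f - rename t (rename s f) := by
    have h := congrArg (rename t) hg1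
    simp only [map_mul, map_sub, rename_X, htp] at h
    rwa [Equiv.swap_apply_left] at h
  have hstg1 : (X q - X r) * rename s (rename t (D f)) =
      rename s (rename t f) - rename s (rename t (rename s f)) := by
    have h := congrArg (rename s) htg1
    simp only [map_mul, map_sub, rename_X, hsr] at h
    rwa [Equiv.swap_apply_left] at h
  unfold antisymmetrize
  linear_combination (X q - X r) * (X p - X r) * hg3 + (X p - X r) * hg2 - (X q - X r) * hsg2 -
    htg1 + hstg1 + hg1

end IsDividedDifference

end MvPolynomial

/-- the divided difference operators on ℤ[x₁,...,x_m] satisfy the braid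
relation ∂_a ∂_{a+1} ∂_a = ∂_{a+1} ∂_a ∂_{a+1}.  Here `D1` is the divided difference
at the pair (x_a, x_{a+1}) and `D2` the one at (x_{a+1}, x_{a+2}), each characterized
uniquely by the divisibility property `(x_a - x_{a+1}) * ∂_a f = f - s_a f`. -/
theorem divided_difference_braid (m a : ℕ) (ha : a + 2 < m)
    (D1 D2 : MvPolynomial (Fin m) ℤ →ₗ[ℤ] MvPolynomial (Fin m) ℤ)
    (hD1 : ∀ f, (X (⟨a, by omega⟩ : Fin m) - X ⟨a + 1, by omega⟩) * D1 f
      = f - rename (Equiv.swap (⟨a, by omega⟩ : Fin m) ⟨a + 1, by omega⟩) f)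
    (hD2 : ∀ f, (X (⟨a + 1, by omega⟩ : Fin m) - X ⟨a + 2, ha⟩) * D2 f
      = f - rename (Equiv.swap (⟨a + 1, by omega⟩ : Fin m) ⟨a + 2, ha⟩) f) :
    ∀ f, D1 (D2 (D1 f)) = D2 (D1 (D2 f)) := by
  intro f
  set i : Fin m := ⟨a, by omega⟩
  set j : Fin m := ⟨a + 1, by omega⟩
  set k : Fin m := ⟨a + 2, ha⟩
  have hij : i ≠ j := by simp [i, j, Fin.ext_iff]
  have hjk : j ≠ k := by simp [j, k, Fin.ext_iff]
  have hik : i ≠ k := by simp [i, k, Fin.ext_iff]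
  have h1 : IsDividedDifference i j ⇑D1 := hD1
  have h2 : IsDividedDifference j k ⇑D2 := hD2
  have hlhs := h1.vandermonde_mul_apply_eq_antisymmetrize hij hjk hik h2 f
  have hrhs :=
    h2.neg.vandermonde_mul_apply_eq_antisymmetrize hjk.symm hij.symm hik.symm h1.neg f
  rw [Equiv.swap_comm k j, Equiv.swap_comm j i, ← antisymmetrize_swap_comm hij hjk hik, ← hlhs]
    at hrhs
  simp only [Pi.neg_apply, map_neg, neg_neg] at hrhs
  have hΔ : (X i - X j) * (X j - X k) * (X i - X k) ≠ (0 : MvPolynomial (Fin m) ℤ) :=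
    mul_ne_zero (mul_ne_zero (X_sub_X_ne_zero hij) (X_sub_X_ne_zero hjk)) (X_sub_X_ne_zero hik)
  exact mul_left_cancel₀ hΔ (by linear_combination -hrhs)
end

section
/- In the ℚ(q)-algebra with generators θ_i, θ_j and relation (q+q⁻¹)θ_iθ_jθ_i = θ_i²θ_j + θ_jθ_i², the divided powers θ_i^{(a)} = θ_i^a/[a]! satisfy θ_i^{(a)} θ_j^{(a+c)} θ_i^{(c)} = θ_j^{(c)} θ_i^{(a+c)} θ_j^{(a)} for all natural numbers a, c, where the same relation with i and j exchanged also holds. -/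
noncomputable section

/-- The field ℚ(q). -/
abbrev Qq : Type := RatFunc ℚ

/-- The variable q of ℚ(q). -/
def qv : Qq := RatFunc.X

/-- The quantum integer [n] = (qⁿ − q⁻ⁿ)/(q − q⁻¹). -/
def qint (n : ℕ) : Qq := (qv ^ n - qv⁻¹ ^ n) / (qv - qv⁻¹)

/-- The quantum factorial [n]! = [n][n−1]⋯[1]. -/
def qfac : ℕ → Qq
  | 0 => 1
  | n + 1 => qint (n + 1) * qfac n

/-- Generators θ_i (= true) and θ_j (= false) of the free algebra. -/
def θfree (b : Bool) : FreeAlgebra Qq Bool := FreeAlgebra.ι Qq b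

/-- The two quantum Serre relations of the negative half of quantum 𝔰𝔩₃:
(q+q⁻¹)θ_iθ_jθ_i = θ_i²θ_j + θ_jθ_i², and the same with i and j exchanged. -/
inductive SerreRel : FreeAlgebra Qq Bool → FreeAlgebra Qq Bool → Prop
  | serre (b : Bool) :
      SerreRel ((qv + qv⁻¹) • (θfree b * θfree (!b) * θfree b))
        (θfree b * θfree b * θfree (!b) + θfree (!b) * θfree b * θfree b)

/-- The negative half U⁻ of quantum 𝔰𝔩₃ over ℚ(q). -/
abbrev Uminus : Type := RingQuot SerreRel

/-- The generators θ_i, θ_j of U⁻. -/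
def θ (b : Bool) : Uminus := RingQuot.mkAlgHom Qq SerreRel (θfree b)

/-- Divided power θ^{(a)} = θ^a / [a]!. -/
def dp (x : Uminus) (a : ℕ) : Uminus := (qfac a)⁻¹ • x ^ a

/-!
Write `x = θ_i`, `y = θ_j` and `k = yx - q xy`. The Serre relations say exactly that `k`
`q`-commutes with both generators: `kx = q⁻¹xk` and `yk = q⁻¹ky`. Moving the `y`'s of
`yⁿxᵐ` to the right past the `x`'s one at a time therefore gives
`yⁿxᵐ = ∑ₜ c(n,m,t) x^(m-t) kᵗ y^(n-t)` with coefficients `c(n,m,t) ∈ ℚ(q)` that do not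
depend on the algebra. Reading this expansion in the opposite algebra, with the roles of `x`
and `y` exchanged (which fixes `k`), gives `yᵐxⁿ = ∑ₜ c(n,m,t) x^(n-t) kᵗ y^(m-t)` with the
same coefficients. For `(n,m) = (c,a+c)`, multiplying the second expansion by `xᵃ` on the
left and the first by `yᵃ` on the right turns both `xᵃ y^(a+c) xᶜ` and `yᶜ x^(a+c) yᵃ` into
`∑ₜ c(c,a+c,t) x^(a+c-t) kᵗ y^(a+c-t)`.
-/

open Finset MulOpposite

lemma qv_ne_zero : qv ≠ 0 := RatFunc.X_ne_zero

lemma qv_sub_inv_ne_zero : qv - qv⁻¹ ≠ 0 := by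
  intro h
  have hsq : qv * qv = 1 := by
    rw [sub_eq_zero] at h
    rw [congrArg (qv * ·) h, mul_inv_cancel₀ qv_ne_zero]
  have hX : (Polynomial.X * Polynomial.X : Polynomial ℚ) = 1 := by
    apply IsFractionRing.injective (Polynomial ℚ) (RatFunc ℚ)
    rwa [map_mul, map_one, RatFunc.algebraMap_X]
  simpa [Polynomial.coeff_one] using congrArg (Polynomial.coeff · 2) hX

lemma qint_zero : qint 0 = 0 := by simp [qint]

lemma qint_succ (s : ℕ) : qint (s + 1) = qv * qint s + qv⁻¹ ^ s := by
  apply mul_right_cancel₀ qv_sub_inv_ne_zero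
  simp only [qint, add_mul, mul_assoc, div_mul_cancel₀ _ qv_sub_inv_ne_zero]
  ring

lemma mul_pow_eq_smul_of_mul_eq_smul {R A : Type*} [CommSemiring R] [Semiring A] [Algebra R A]
    {a b : A} {c : R} (h : a * b = c • (b * a)) (n : ℕ) :
    a * b ^ n = c ^ n • (b ^ n * a) := by
  induction n with
  | zero => simp
  | succ n ih =>
    rw [pow_succ, ← mul_assoc, ih, smul_mul_assoc, mul_assoc, h, mul_smul_comm, smul_smul,
      ← mul_assoc, ← pow_succ, ← pow_succ]

section QSerre

variable {A : Type*} [Ring A] [Algebra Qq A] {x y : A}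

def IsQSerre (x y : A) : Prop :=
  (qv + qv⁻¹) • (x * y * x) = x * x * y + y * x * x

def qcomm (x y : A) : A := y * x - qv • (x * y)

lemma IsQSerre.mul_qcomm (hx : IsQSerre x y) : x * qcomm x y = qv • (qcomm x y * x) := by
  have hyxx : qv • (y * x * x) = (qv * qv) • (x * y * x) + x * y * x - qv • (x * x * y) := by
    have h := congrArg (qv • ·) hx
    simp only [smul_smul, smul_add, mul_inv_cancel₀ qv_ne_zero, add_smul, one_smul] at h
    rw [h]
    abel
  simp only [qcomm, mul_sub, sub_mul, mul_smul_comm, smul_mul_assoc, smul_smul, smul_sub,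
    ← mul_assoc]
  rw [hyxx]
  abel

lemma IsQSerre.qcomm_mul (hx : IsQSerre x y) : qcomm x y * x = qv⁻¹ • (x * qcomm x y) := by
  rw [hx.mul_qcomm, smul_smul, inv_mul_cancel₀ qv_ne_zero, one_smul]

lemma IsQSerre.op (hx : IsQSerre x y) : IsQSerre (op x) (op y) := by
  apply MulOpposite.unop_injective
  simp only [IsQSerre, unop_smul, unop_mul, unop_add, unop_op, ← mul_assoc] at hx ⊢
  rw [hx, add_comm]

lemma qcomm_op : qcomm (op y) (op x) = op (qcomm x y) := by
  simp [qcomm]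

lemma IsQSerre.mul_qcomm_of_swap (hy : IsQSerre y x) :
    y * qcomm x y = qv⁻¹ • (qcomm x y * y) := by
  have h := congrArg unop hy.op.mul_qcomm
  simp only [qcomm_op, unop_mul, unop_smul, unop_op] at h
  rw [h, smul_smul, inv_mul_cancel₀ qv_ne_zero, one_smul]

lemma IsQSerre.mul_pow (hx : IsQSerre x y) (s : ℕ) :
    y * x ^ s = qv ^ s • (x ^ s * y) + qint s • (x ^ (s - 1) * qcomm x y) := by
  induction s with
  | zero => simp [qint_zero]
  | succ s ih =>
    have hyx : y * x = qv • (x * y) + qcomm x y := by rw [qcomm]; abel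
    have hkx : qcomm x y * x ^ s = qv⁻¹ ^ s • (x ^ s * qcomm x y) :=
      mul_pow_eq_smul_of_mul_eq_smul hx.qcomm_mul s
    have hxx : qint s • (x * (x ^ (s - 1) * qcomm x y)) = qint s • (x ^ s * qcomm x y) := by
      cases s with
      | zero => simp [qint_zero]
      | succ s => rw [← mul_assoc, ← pow_succ', Nat.add_sub_cancel]
    rw [pow_succ', ← mul_assoc, hyx, add_mul, smul_mul_assoc, mul_assoc, ih, mul_add,
      mul_smul_comm, mul_smul_comm, hxx, hkx, Nat.add_sub_cancel, qint_succ, ← mul_assoc,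
      ← pow_succ', smul_add, smul_smul, smul_smul, ← pow_succ', add_smul, add_assoc]

lemma mul_pbw_monomial (hx : IsQSerre x y) (hy : IsQSerre y x) (p t r : ℕ) :
    y * (x ^ p * (qcomm x y ^ t * y ^ r))
      = (qv ^ p * qv⁻¹ ^ t) • (x ^ p * (qcomm x y ^ t * y ^ (r + 1)))
        + qint p • (x ^ (p - 1) * (qcomm x y ^ (t + 1) * y ^ r)) := by
  have hyk : y * qcomm x y ^ t = qv⁻¹ ^ t • (qcomm x y ^ t * y) :=
    mul_pow_eq_smul_of_mul_eq_smul hy.mul_qcomm_of_swap t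
  rw [← mul_assoc, hx.mul_pow, add_mul, smul_mul_assoc, smul_mul_assoc, mul_assoc, mul_assoc,
    ← mul_assoc y, hyk, smul_mul_assoc, mul_assoc, ← pow_succ', ← mul_assoc (qcomm x y),
    ← pow_succ', mul_smul_comm, smul_smul]

/-- The coefficient of `x ^ (m - t) * qcomm x y ^ t * y ^ (n - t)` in `y ^ n * x ^ m`. -/
def pbwCoeff : ℕ → ℕ → ℕ → Qq
  | 0, _, 0 => 1
  | 0, _, _ + 1 => 0
  | n + 1, m, 0 => qv ^ m * pbwCoeff n m 0
  | n + 1, m, t + 1 =>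
    qv ^ (m - (t + 1)) * qv⁻¹ ^ (t + 1) * pbwCoeff n m (t + 1) + qint (m - t) * pbwCoeff n m t

lemma pbwCoeff_eq_zero_of_lt {n t : ℕ} (m : ℕ) (h : n < t) : pbwCoeff n m t = 0 := by
  induction n generalizing t with
  | zero => obtain ⟨t, rfl⟩ := Nat.exists_eq_add_of_lt h; rfl
  | succ n ih =>
    obtain ⟨t, rfl⟩ := Nat.exists_eq_add_of_lt (Nat.zero_lt_of_lt h)
    rw [pbwCoeff, ih (by omega), ih (by omega), mul_zero, mul_zero, add_zero]

lemma pow_mul_pow_eq_sum (hx : IsQSerre x y) (hy : IsQSerre y x) (n m : ℕ) :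
    y ^ n * x ^ m = ∑ t ∈ range (n + 1),
      pbwCoeff n m t • (x ^ (m - t) * (qcomm x y ^ t * y ^ (n - t))) := by
  induction n with
  | zero => simp [pbwCoeff]
  | succ n ih =>
    set P : ℕ → A := fun t ↦ x ^ (m - t) * (qcomm x y ^ t * y ^ (n + 1 - t))
    set f : ℕ → A := fun t ↦ (qv ^ (m - t) * qv⁻¹ ^ t * pbwCoeff n m t) • P t
    set g : ℕ → A := fun t ↦ (qint (m - t) * pbwCoeff n m t) • P (t + 1)
    have hf : f (n + 1) = 0 := by simp [f, pbwCoeff_eq_zero_of_lt m (Nat.lt_succ_self n)]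
    calc y ^ (n + 1) * x ^ m
        = ∑ t ∈ range (n + 1), (f t + g t) := by
          rw [pow_succ', mul_assoc, ih, mul_sum]
          refine sum_congr rfl fun t ht ↦ ?_
          have ht : t ≤ n := Nat.lt_succ_iff.mp (mem_range.mp ht)
          rw [mul_smul_comm, mul_pbw_monomial hx hy, smul_add, smul_smul, smul_smul,
            show n - t + 1 = n + 1 - t by omega, show m - t - 1 = m - (t + 1) by omega,
            show n - t = n + 1 - (t + 1) by omega, mul_comm, mul_comm (pbwCoeff n m t)]
      _ = ∑ t ∈ range (n + 1), (f (t + 1) + g t) + f 0 := by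
          rw [sum_add_distrib, sum_add_distrib, sum_range_succ' f,
            sum_range_succ (fun t ↦ f (t + 1)), hf, add_zero]
          abel
      _ = ∑ t ∈ range (n + 2), pbwCoeff (n + 1) m t • P t := by
          rw [sum_range_succ' _ (n + 1)]
          congr 1
          · refine sum_congr rfl fun t _ ↦ ?_
            simp only [f, g, pbwCoeff, add_smul]
          · simp [f, pbwCoeff]

lemma pow_mul_pow_eq_sum_swap (hx : IsQSerre x y) (hy : IsQSerre y x) (n m : ℕ) :
    y ^ m * x ^ n = ∑ t ∈ range (n + 1),
      pbwCoeff n m t • (x ^ (n - t) * (qcomm x y ^ t * y ^ (m - t))) := by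
  have h := congrArg unop (pow_mul_pow_eq_sum hy.op hx.op n m)
  simpa only [qcomm_op, unop_mul, unop_pow, unop_op, unop_sum, unop_smul, mul_assoc] using h

lemma pow_mul_pow_mul_pow_eq (hx : IsQSerre x y) (hy : IsQSerre y x) (a c : ℕ) :
    x ^ a * y ^ (a + c) * x ^ c = y ^ c * x ^ (a + c) * y ^ a := by
  rw [mul_assoc, pow_mul_pow_eq_sum_swap hx hy, pow_mul_pow_eq_sum hx hy, mul_sum, sum_mul]
  refine sum_congr rfl fun t ht ↦ ?_
  have ht : t ≤ c := Nat.lt_succ_iff.mp (mem_range.mp ht)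
  rw [mul_smul_comm, smul_mul_assoc, ← mul_assoc, ← pow_add, mul_assoc _ _ (y ^ a),
    mul_assoc _ _ (y ^ a), ← pow_add, show a + (c - t) = a + c - t by omega,
    show c - t + a = a + c - t by omega]

end QSerre

lemma dp_mul_dp_mul_dp (u v w : Uminus) (a b c : ℕ) :
    dp u a * dp v b * dp w c
      = ((qfac a)⁻¹ * (qfac b)⁻¹ * (qfac c)⁻¹) • (u ^ a * v ^ b * w ^ c) := by
  rw [dp, dp, dp, smul_mul_smul_comm, smul_mul_smul_comm]

lemma isQSerre_θ (b : Bool) : IsQSerre (θ b) (θ !b) := by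
  simpa only [IsQSerre, map_smul, map_mul, map_add, θ] using
    RingQuot.mkAlgHom_rel Qq (SerreRel.serre b)

/-- in U⁻ (quantum 𝔰𝔩₃ negative half), the divided powers satisfy
θ_i^{(a)} θ_j^{(a+c)} θ_i^{(c)} = θ_j^{(c)} θ_i^{(a+c)} θ_j^{(a)} for all a, c,
and the same relation with i and j exchanged. -/
theorem tight_monomial_identity (a c : ℕ) :
    dp (θ true) a * dp (θ false) (a + c) * dp (θ true) c
      = dp (θ false) c * dp (θ true) (a + c) * dp (θ false) a ∧
    dp (θ false) a * dp (θ true) (a + c) * dp (θ false) c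
      = dp (θ true) c * dp (θ false) (a + c) * dp (θ true) a := by
  have scalars : (qfac a)⁻¹ * (qfac (a + c))⁻¹ * (qfac c)⁻¹
      = (qfac c)⁻¹ * (qfac (a + c))⁻¹ * (qfac a)⁻¹ := by ring
  have hi : IsQSerre (θ true) (θ false) := isQSerre_θ true
  have hj : IsQSerre (θ false) (θ true) := isQSerre_θ false
  simp only [dp_mul_dp_mul_dp, pow_mul_pow_mul_pow_eq hi hj, pow_mul_pow_mul_pow_eq hj hi,
    scalars, and_self]

end
end

section
/- With the twisted comultiplication r on the free algebra 'f (as in Lusztig), the elements θ_iθ_j − θ_jθ_i for i·j = 0, and (q+q⁻¹)θ_iθ_jθ_i − θ_i²θ_j − θ_jθ_i² for i·j = −1, lie in the radical of the bilinear form (·,·) on 'f determined by: (1,1)=1, (θ_i,θ_j) = δ_{ij}(1−q²)⁻¹, (x, yy') = (r(x), y⊗y'), and (xx', y) = (x⊗x', r(y)). -/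
noncomputable section

variable {I : Type} (G : SimpleGraph I) [DecidableEq I] [DecidableRel G.Adj]

/-- The Cartan form: i·i = 2, i·j = −1 for adjacent vertices, 0 otherwise. -/
def cartan (i j : I) : ℤ := if i = j then 2 else if G.Adj i j then -1 else 0

/-- The pairing of the weights of two words: Σ_{i ∈ u, j ∈ v} i·j. -/
def pairWt (u v : List I) : ℤ := (u.map fun i => ((v.map fun j => cartan G i j).sum)).sum

/-- 'f, the free associative ℚ(q)-algebra on generators θ_i, i ∈ I, realized as the
monoid algebra of the free monoid on I (basis: the words in I). -/
abbrev FreeF (I : Type) : Type := MonoidAlgebra Qq (FreeMonoid I)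

/-- The generator θ_i. -/
def θgen (i : I) : FreeF I := MonoidAlgebra.single (FreeMonoid.of i) 1

/-- The underlying module of 'f ⊗ 'f, with basis the pairs of words. -/
abbrev FF2 (I : Type) : Type := (FreeMonoid I × FreeMonoid I) →₀ Qq

/-- The twisted multiplication on 'f ⊗ 'f:
(x₁⊗x₂)(x₁'⊗x₂') = q^{−|x₂|·|x₁'|} x₁x₁' ⊗ x₂x₂' on basis elements. -/
def tmul (f g : FF2 I) : FF2 I :=
  f.sum fun p cp => g.sum fun p' cp' =>
    Finsupp.single (p.1 * p'.1, p.2 * p'.2)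
      (cp * cp' * qv ^ (-(pairWt G p.2.toList p'.1.toList)))

/-- The defining properties of the comultiplication r : 'f → 'f ⊗ 'f. -/
def IsComult (r : FreeF I →ₗ[Qq] FF2 I) : Prop :=
  r 1 = Finsupp.single (1, 1) 1 ∧
  (∀ x y : FreeF I, r (x * y) = tmul G (r x) (r y)) ∧
  ∀ i : I, r (θgen i)
    = Finsupp.single (FreeMonoid.of i, 1) 1 + Finsupp.single (1, FreeMonoid.of i) 1

/-- The element y ⊗ y' of 'f ⊗ 'f. -/
def tens (y y' : FreeF I) : FF2 I :=
  y.coeff.sum fun w c => y'.coeff.sum fun w' c' => Finsupp.single (w, w') (c * c')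

/-- The bilinear form on 'f ⊗ 'f induced by a bilinear form B on 'f:
(x₁⊗x₂, y₁⊗y₂) = (x₁,y₁)(x₂,y₂). -/
def form2 (B : FreeF I →ₗ[Qq] FreeF I →ₗ[Qq] Qq) (f g : FF2 I) : Qq :=
  f.sum fun p c => g.sum fun p' c' =>
    c * c' * B (MonoidAlgebra.single p.1 1) (MonoidAlgebra.single p'.1 1)
      * B (MonoidAlgebra.single p.2 1) (MonoidAlgebra.single p'.2 1)

/-! Distinct weight spaces are orthogonal, so an element of a single weight space lies in the
radical as soon as it pairs to zero, on both sides, with the finitely many words of its weight: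
ij and ji for the commutator, iij, iji and jii for the Serre element. Applying
(x, y θ_f) = (r(x), y ⊗ θ_f) once or twice expresses these pairings through the values
(θ_a, θ_b) = δ_ab κ and the powers q^{-a·b}; the resulting Gram matrices annihilate both
elements for every value of κ. -/

lemma tmul_single_single (p p' : FreeMonoid I × FreeMonoid I) (c c' : Qq) :
    tmul G (Finsupp.single p c) (Finsupp.single p' c') =
      Finsupp.single (p.1 * p'.1, p.2 * p'.2)
        (c * c' * qv ^ (-pairWt G p.2.toList p'.1.toList)) := by
  unfold tmul
  rw [Finsupp.sum_single_index, Finsupp.sum_single_index] <;> simp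

lemma tmul_add_left (f g h : FF2 I) : tmul G (f + g) h = tmul G f h + tmul G g h := by
  unfold tmul
  rw [Finsupp.sum_add_index'] <;> simp [add_mul, Finsupp.single_add, Finsupp.sum_add]

lemma tmul_add_right (f g h : FF2 I) : tmul G f (g + h) = tmul G f g + tmul G f h := by
  unfold tmul
  rw [← Finsupp.sum_add]
  refine Finsupp.sum_congr fun p _ => ?_
  rw [Finsupp.sum_add_index'] <;> simp [mul_add, add_mul, Finsupp.single_add]

lemma tens_single {I : Type} (w w' : FreeMonoid I) (c c' : Qq) :
    tens (MonoidAlgebra.single w c : FreeF I) (MonoidAlgebra.single w' c') =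
      Finsupp.single (w, w') (c * c') := by
  unfold tens
  rw [MonoidAlgebra.coeff_single, MonoidAlgebra.coeff_single,
    Finsupp.sum_single_index, Finsupp.sum_single_index] <;> simp

lemma form2_single_single {I : Type} (B : FreeF I →ₗ[Qq] FreeF I →ₗ[Qq] Qq)
    (p p' : FreeMonoid I × FreeMonoid I) (c c' : Qq) :
    form2 B (Finsupp.single p c) (Finsupp.single p' c') =
      c * c' * B (MonoidAlgebra.single p.1 1) (MonoidAlgebra.single p'.1 1)
        * B (MonoidAlgebra.single p.2 1) (MonoidAlgebra.single p'.2 1) := by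
  unfold form2
  rw [Finsupp.sum_single_index, Finsupp.sum_single_index] <;> simp

lemma form2_add_left {I : Type} (B : FreeF I →ₗ[Qq] FreeF I →ₗ[Qq] Qq) (f g h : FF2 I) :
    form2 B (f + g) h = form2 B f h + form2 B g h := by
  unfold form2
  rw [Finsupp.sum_add_index'] <;> simp [add_mul, Finsupp.sum_add]

section WeightSpace

variable {R M W : Type*} [CommSemiring R] (wt : M → W)

def weightSpace (m : W) : Submodule R (MonoidAlgebra R M) :=
  Submodule.span R ((fun u => MonoidAlgebra.single u 1) '' {u | wt u = m})

lemma single_mem_weightSpace {u : M} {m : W} (hu : wt u = m) :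
    MonoidAlgebra.single u 1 ∈ weightSpace (R := R) wt m :=
  Submodule.subset_span ⟨u, hu, rfl⟩

variable {B : MonoidAlgebra R M →ₗ[R] MonoidAlgebra R M →ₗ[R] R}

lemma form_eq_zero_of_mem_weightSpace
    (horth : ∀ u v, wt u ≠ wt v → B (MonoidAlgebra.single u 1) (MonoidAlgebra.single v 1) = 0)
    {m : W} {z : MonoidAlgebra R M} (hz : z ∈ weightSpace wt m) {v : M} (hv : wt v ≠ m) :
    B z (MonoidAlgebra.single v 1) = 0 ∧ B (MonoidAlgebra.single v 1) z = 0 := by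
  induction hz using Submodule.span_induction with
  | mem x hx =>
    obtain ⟨u, rfl, rfl⟩ := hx
    exact ⟨horth _ _ (Ne.symm hv), horth _ _ hv⟩
  | zero => simp
  | add x y _ _ hx hy => simp [hx.1, hx.2, hy.1, hy.2]
  | smul a x _ hx => simp [hx.1, hx.2]

lemma radical_of_mem_weightSpace
    (horth : ∀ u v, wt u ≠ wt v → B (MonoidAlgebra.single u 1) (MonoidAlgebra.single v 1) = 0)
    {m : W} {z : MonoidAlgebra R M} (hz : z ∈ weightSpace wt m)
    (hm : ∀ v, wt v = m →
      B z (MonoidAlgebra.single v 1) = 0 ∧ B (MonoidAlgebra.single v 1) z = 0) :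
    (∀ y, B z y = 0) ∧ ∀ y, B y z = 0 := by
  have hbasis (v : M) :
      B z (MonoidAlgebra.single v 1) = 0 ∧ B (MonoidAlgebra.single v 1) z = 0 := by
    by_cases hv : wt v = m
    · exact hm v hv
    · exact form_eq_zero_of_mem_weightSpace wt horth hz hv
  have hleft : B z = 0 := (MonoidAlgebra.basis M R).ext fun v => by simpa using (hbasis v).1
  have hright : B.flip z = 0 := (MonoidAlgebra.basis M R).ext fun v => by simpa using (hbasis v).2
  exact ⟨fun y => by simp [hleft], fun y => by simpa using LinearMap.congr_fun hright y⟩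

end WeightSpace

lemma θgen_mul_θgen {I : Type} (a b : I) :
    θgen a * θgen b = MonoidAlgebra.single (FreeMonoid.of a * FreeMonoid.of b) (1 : Qq) := by
  rw [θgen, θgen, MonoidAlgebra.single_mul_single, one_mul]

lemma θgen_mul_θgen_mul_θgen {I : Type} (a b c : I) :
    θgen a * θgen b * θgen c =
      MonoidAlgebra.single (FreeMonoid.of a * FreeMonoid.of b * FreeMonoid.of c) (1 : Qq) := by
  rw [θgen_mul_θgen, θgen, MonoidAlgebra.single_mul_single, one_mul]

lemma form_eq_zero_of_length_ne {I : Type} {B : FreeF I →ₗ[Qq] FreeF I →ₗ[Qq] Qq}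
    (horth : ∀ w w' : FreeMonoid I, (↑w.toList : Multiset I) ≠ ↑w'.toList →
      B (MonoidAlgebra.single w 1) (MonoidAlgebra.single w' 1) = 0)
    {w w' : FreeMonoid I} (h : w.length ≠ w'.length) :
    B (MonoidAlgebra.single w 1) (MonoidAlgebra.single w' 1) = 0 :=
  horth w w' fun hw => h (by simpa [FreeMonoid.length] using congrArg Multiset.card hw)

lemma cartan_self (i : I) : cartan G i i = 2 := if_pos rfl

lemma cartan_of_adj {i j : I} (h : G.Adj i j) : cartan G i j = -1 := by
  simp [cartan, G.ne_of_adj h, h]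

lemma cartan_of_not_adj {i j : I} (hij : i ≠ j) (h : ¬G.Adj i j) : cartan G i j = 0 := by
  simp [cartan, hij, h]

lemma FreeMonoid.eq_or_eq_of_coe_toList_eq_pair {α : Type*} {i j : α} {w : FreeMonoid α}
    (h : (w.toList : Multiset α) = {i, j}) :
    w = FreeMonoid.of i * FreeMonoid.of j ∨ w = FreeMonoid.of j * FreeMonoid.of i := by
  obtain ⟨a, b, rfl⟩ := FreeMonoid.length_eq_two.1
    (by simpa [FreeMonoid.length] using congrArg Multiset.card h)
  simp only [toList_mul, toList_of, List.cons_append, List.nil_append, ← Multiset.cons_coe,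
    Multiset.coe_nil, Multiset.cons_zero, Multiset.insert_eq_cons, Multiset.cons_eq_cons,
    Multiset.singleton_inj, ne_eq, Multiset.singleton_eq_cons_iff, exists_eq_right_right,
    and_true] at h
  rcases h with ⟨rfl, rfl⟩ | ⟨-, rfl, rfl⟩ <;> simp

lemma FreeMonoid.eq_or_eq_of_coe_toList_eq_triple {α : Type*} {i j : α} (hij : i ≠ j)
    {w : FreeMonoid α} (h : (w.toList : Multiset α) = {i, i, j}) :
    w = FreeMonoid.of i * FreeMonoid.of i * FreeMonoid.of j ∨
      w = FreeMonoid.of i * FreeMonoid.of j * FreeMonoid.of i ∨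
      w = FreeMonoid.of j * FreeMonoid.of i * FreeMonoid.of i := by
  obtain ⟨a, b, c, rfl⟩ := FreeMonoid.length_eq_three.1
    (by simpa [FreeMonoid.length] using congrArg Multiset.card h)
  simp only [toList_mul, toList_of, List.cons_append, List.nil_append, ← Multiset.cons_coe,
    Multiset.coe_nil, Multiset.cons_zero, Multiset.insert_eq_cons, Multiset.cons_eq_cons,
    Multiset.singleton_inj, ne_eq, Multiset.singleton_eq_cons_iff, exists_eq_right_right,
    and_true, ↓existsAndEq] at h
  aesop

section Pairing

variable {r : FreeF I →ₗ[Qq] FF2 I} {B : FreeF I →ₗ[Qq] FreeF I →ₗ[Qq] Qq}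

lemma form_θgen_mul_θgen (hr : IsComult G r)
    (hdeg : ∀ w w' : FreeMonoid I, w.length ≠ w'.length →
      B (MonoidAlgebra.single w 1) (MonoidAlgebra.single w' 1) = 0)
    (hmulR : ∀ x y y' : FreeF I, B x (y * y') = form2 B (r x) (tens y y')) (a b c d : I) :
    B (θgen a * θgen b) (θgen c * θgen d) =
      B (θgen a) (θgen c) * B (θgen b) (θgen d)
        + qv ^ (-cartan G a b) * (B (θgen b) (θgen c) * B (θgen a) (θgen d)) := by
  obtain ⟨-, hmul, hgen⟩ := hr
  rw [hmulR, hmul, hgen, hgen, θgen, θgen, tens_single]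
  simp only [tmul_add_left, tmul_add_right, tmul_single_single, form2_add_left,
    form2_single_single, one_mul, mul_one, FreeMonoid.toList_one, FreeMonoid.toList_of, pairWt,
    List.map_nil, List.sum_nil, List.map_cons, List.sum_cons, add_zero, neg_zero, zpow_zero]
  rw [hdeg _ (FreeMonoid.of c) (by simp), hdeg 1 (FreeMonoid.of c) (by simp)]
  simp only [θgen]
  ring

lemma form_θgen_mul_θgen_mul_θgen (hr : IsComult G r)
    (hdeg : ∀ w w' : FreeMonoid I, w.length ≠ w'.length →
      B (MonoidAlgebra.single w 1) (MonoidAlgebra.single w' 1) = 0)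
    (hmulR : ∀ x y y' : FreeF I, B x (y * y') = form2 B (r x) (tens y y')) (a b c d e f : I) :
    B (θgen a * θgen b * θgen c) (θgen d * θgen e * θgen f) =
      B (θgen a * θgen b) (θgen d * θgen e) * B (θgen c) (θgen f)
        + qv ^ (-cartan G b c) * (B (θgen a * θgen c) (θgen d * θgen e) * B (θgen b) (θgen f))
        + qv ^ (-cartan G a b) * qv ^ (-cartan G a c) *
            (B (θgen b * θgen c) (θgen d * θgen e) * B (θgen a) (θgen f)) := by
  obtain ⟨-, hmul, hgen⟩ := hr
  rw [hmulR, hmul, hmul, hgen, hgen, hgen, θgen_mul_θgen d e, θgen.eq_1 f, tens_single]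
  simp only [tmul_add_left, tmul_add_right, tmul_single_single, form2_add_left,
    form2_single_single, one_mul, mul_one, FreeMonoid.toList_one, FreeMonoid.toList_of,
    FreeMonoid.toList_mul, pairWt, List.map_nil, List.sum_nil, List.map_cons, List.sum_cons,
    List.singleton_append, add_zero, neg_zero, zpow_zero]
  -- against θ_dθ_e ⊗ θ_f only the terms of r(θ_aθ_bθ_c) of bidegree (2, 1) survive
  simp only [hdeg 1 (FreeMonoid.of f) (by simp),
    hdeg 1 (FreeMonoid.of d * FreeMonoid.of e) (by simp),
    fun x => hdeg (FreeMonoid.of x) (FreeMonoid.of d * FreeMonoid.of e) (by simp),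
    θgen, MonoidAlgebra.single_mul_single, one_mul, mul_zero, zero_mul, add_zero, zero_add]
  ring

lemma commutator_mem_radical (hr : IsComult G r)
    (horth : ∀ w w' : FreeMonoid I, (↑w.toList : Multiset I) ≠ ↑w'.toList →
      B (MonoidAlgebra.single w 1) (MonoidAlgebra.single w' 1) = 0)
    {κ : Qq} (hθ : ∀ i j : I, B (θgen i) (θgen j) = if i = j then κ else 0)
    (hmulR : ∀ x y y' : FreeF I, B x (y * y') = form2 B (r x) (tens y y'))
    {i j : I} (hij : i ≠ j) (hnadj : ¬G.Adj i j) :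
    (∀ y, B (θgen i * θgen j - θgen j * θgen i) y = 0) ∧
      ∀ y, B y (θgen i * θgen j - θgen j * θgen i) = 0 := by
  have hmem : θgen i * θgen j - θgen j * θgen i ∈
      weightSpace (fun w : FreeMonoid I => (w.toList : Multiset I)) {i, j} := by
    rw [θgen_mul_θgen, θgen_mul_θgen]
    exact sub_mem (single_mem_weightSpace _ rfl) (single_mem_weightSpace _ (Multiset.pair_comm _ _))
  refine radical_of_mem_weightSpace _ horth hmem fun w hw => ?_
  have hdeg (w w' : FreeMonoid I) := form_eq_zero_of_length_ne (w := w) (w' := w') horth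
  rcases FreeMonoid.eq_or_eq_of_coe_toList_eq_pair hw with rfl | rfl <;>
  · simp only [← θgen_mul_θgen, map_sub, LinearMap.sub_apply, form_θgen_mul_θgen G hr hdeg hmulR,
      hθ, cartan_of_not_adj G hij hnadj, cartan_of_not_adj G hij.symm (fun h => hnadj h.symm)]
    simp [hij, hij.symm]

lemma serre_mem_radical (hr : IsComult G r)
    (horth : ∀ w w' : FreeMonoid I, (↑w.toList : Multiset I) ≠ ↑w'.toList →
      B (MonoidAlgebra.single w 1) (MonoidAlgebra.single w' 1) = 0)
    {κ : Qq} (hθ : ∀ i j : I, B (θgen i) (θgen j) = if i = j then κ else 0)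
    (hmulR : ∀ x y y' : FreeF I, B x (y * y') = form2 B (r x) (tens y y'))
    {i j : I} (hadj : G.Adj i j) :
    (∀ y, B ((qv + qv⁻¹) • (θgen i * θgen j * θgen i)
        - θgen i * θgen i * θgen j - θgen j * θgen i * θgen i) y = 0) ∧
      ∀ y, B y ((qv + qv⁻¹) • (θgen i * θgen j * θgen i)
        - θgen i * θgen i * θgen j - θgen j * θgen i * θgen i) = 0 := by
  have hij : i ≠ j := G.ne_of_adj hadj
  have hmem : (qv + qv⁻¹) • (θgen i * θgen j * θgen i)
      - θgen i * θgen i * θgen j - θgen j * θgen i * θgen i ∈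
      weightSpace (fun w : FreeMonoid I => (w.toList : Multiset I)) {i, i, j} := by
    simp only [θgen_mul_θgen_mul_θgen]
    refine sub_mem (sub_mem (Submodule.smul_mem _ _ (single_mem_weightSpace _ ?_))
      (single_mem_weightSpace _ rfl)) (single_mem_weightSpace _ ?_)
    · exact congrArg (i ::ₘ ·) (Multiset.pair_comm j i)
    · exact (Multiset.cons_swap j i _).trans (congrArg (i ::ₘ ·) (Multiset.pair_comm j i))
  refine radical_of_mem_weightSpace _ horth hmem fun w hw => ?_
  have hdeg (w w' : FreeMonoid I) := form_eq_zero_of_length_ne (w := w) (w' := w') horth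
  have hq : qv ≠ 0 := RatFunc.X_ne_zero
  rcases FreeMonoid.eq_or_eq_of_coe_toList_eq_triple hij hw with rfl | rfl | rfl <;>
  · simp only [← θgen_mul_θgen_mul_θgen, map_sub, map_smul, LinearMap.sub_apply,
      LinearMap.smul_apply, smul_eq_mul, form_θgen_mul_θgen_mul_θgen G hr hdeg hmulR,
      form_θgen_mul_θgen G hr hdeg hmulR, hθ, cartan_self, cartan_of_adj G hadj,
      cartan_of_adj G hadj.symm]
    simp only [hij, hij.symm, ↓reduceIte, mul_zero, zero_mul, add_zero, zero_add, neg_neg,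
      zpow_neg, zpow_ofNat, pow_one, Int.reduceNeg]
    constructor <;> field_simp <;> ring

end Pairing

theorem serre_elements_in_radical
    (r : FreeF I →ₗ[Qq] FF2 I) (hr : IsComult G r)
    (B : FreeF I →ₗ[Qq] FreeF I →ₗ[Qq] Qq)
    (horth : ∀ w w' : FreeMonoid I,
      (↑w.toList : Multiset I) ≠ (↑w'.toList : Multiset I) →
      B (MonoidAlgebra.single w 1) (MonoidAlgebra.single w' 1) = 0)
    (hθ : ∀ i j : I, B (θgen i) (θgen j) = if i = j then (1 - qv ^ 2)⁻¹ else 0)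
    (hmulR : ∀ x y y' : FreeF I, B x (y * y') = form2 B (r x) (tens y y')) :
    ∀ i j : I, i ≠ j →
      (¬ G.Adj i j →
        (∀ y, B (θgen i * θgen j - θgen j * θgen i) y = 0) ∧
        (∀ y, B y (θgen i * θgen j - θgen j * θgen i) = 0)) ∧
      (G.Adj i j →
        (∀ y, B ((qv + qv⁻¹) • (θgen i * θgen j * θgen i)
            - θgen i * θgen i * θgen j - θgen j * θgen i * θgen i) y = 0) ∧
        (∀ y, B y ((qv + qv⁻¹) • (θgen i * θgen j * θgen i)
            - θgen i * θgen i * θgen j - θgen j * θgen i * θgen i) = 0)) := fun _ _ hij =>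
  ⟨commutator_mem_radical G hr horth hθ hmulR hij, serre_mem_radical G hr horth hθ hmulR⟩

end
end

section
/- The center of the nilHecke ring NH_m is the ring of symmetric polynomials ℤ[x₁,...,x_m]^{S_m}. -/
/-!
A central `z` commutes with the multiplication operators `x_a`, which generate all
multiplication operators, so `z` is multiplication by `p = z 1`. Multiplication by `p`
commutes with `∂_a` exactly when `s_a p = p`: multiply the commutator by the nonzero
`x_a - x_{a+1}` and use `(x_a - x_{a+1}) ∂_a f = f - s_a f`. Finally, the adjacent
transpositions `s_a` generate `S_m`.
-/

open MvPolynomial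

namespace MvPolynomial

variable {σ R : Type*}

theorem isSymmetric_of_mclosure_eq_top [CommSemiring R] {S : Set (Equiv.Perm σ)}
    (hS : Submonoid.closure S = ⊤) {p : MvPolynomial σ R} (h : ∀ e ∈ S, rename e p = p) :
    p.IsSymmetric := by
  intro e
  induction (hS ▸ Submonoid.mem_top e : e ∈ Submonoid.closure S) using
    Submonoid.closure_induction with
  | mem e he => exact h e he
  | one => exact rename_id_apply p
  | mul e f _ _ he hf =>
    rw [Equiv.Perm.coe_mul, ← rename_rename, hf, he]

theorem isSymmetric_of_rename_swap_succ [CommSemiring R] {m : ℕ} {p : MvPolynomial (Fin m) R}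
    (h : ∀ (a : ℕ) (ha : a + 1 < m),
      rename (Equiv.swap (⟨a, Nat.lt_of_succ_lt ha⟩ : Fin m) ⟨a + 1, ha⟩) p = p) :
    p.IsSymmetric := by
  cases m with
  | zero => intro e; rw [Subsingleton.elim e 1]; exact rename_id_apply p
  | succ n =>
    refine isSymmetric_of_mclosure_eq_top (Equiv.Perm.mclosure_swap_castSucc_succ n) ?_
    rintro _ ⟨i, rfl⟩
    exact h i (Nat.succ_lt_succ i.isLt)

theorem eq_mulLeft_of_commute_mulLeft_X [CommSemiring R] (z : Module.End R (MvPolynomial σ R))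
    (h : ∀ i, Commute z (LinearMap.mulLeft R (X i))) : z = LinearMap.mulLeft R (z 1) := by
  have hcomm (q : MvPolynomial σ R) : Commute z (LinearMap.mulLeft R q) := by
    have hq : Algebra.lmul R _ q ∈ Algebra.adjoin R (Algebra.lmul R _ '' Set.range X) := by
      rw [Algebra.adjoin_image, adjoin_range_X]
      exact Subalgebra.mem_map.mpr ⟨q, Algebra.mem_top, rfl⟩
    refine Algebra.commute_of_mem_adjoin_of_forall_mem_commute hq ?_
    rintro _ ⟨_, ⟨i, rfl⟩, rfl⟩
    exact h i
  refine LinearMap.ext fun f => ?_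
  simpa [mul_comm] using LinearMap.congr_fun (hcomm f) 1

section DividedDifference

variable [CommRing R] [DecidableEq σ] {i j : σ} {D : Module.End R (MvPolynomial σ R)}

theorem commute_mulLeft_iff_rename_swap_eq_self [IsDomain R] (hij : i ≠ j)
    (hD : ∀ f, (X i - X j) * D f = f - rename (Equiv.swap i j) f) {p : MvPolynomial σ R} :
    Commute (LinearMap.mulLeft R p) D ↔ rename (Equiv.swap i j) p = p := by
  have hXij : (X i - X j : MvPolynomial σ R) ≠ 0 := sub_ne_zero.mpr (X_injective.ne hij)
  constructor
  · intro h
    have hD1 : (X i - X j) * D 1 = 0 := by rw [hD, map_one, sub_self]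
    have := congrArg ((X i - X j) * ·) (LinearMap.congr_fun h 1)
    simp only [Module.End.mul_apply, LinearMap.mulLeft_apply, mul_one] at this
    rw [hD, mul_left_comm, hD1, mul_zero, eq_comm, sub_eq_zero] at this
    exact this.symm
  · intro hp
    refine LinearMap.ext fun f => ?_
    refine mul_left_cancel₀ hXij ?_
    simp only [Module.End.mul_apply, LinearMap.mulLeft_apply]
    rw [mul_left_comm, hD, hD, map_mul, hp, mul_sub]

end DividedDifference

end MvPolynomial

/-- the center of the nilHecke ring NH_m is the ring of symmetric
polynomials: realizing NH_m as the subalgebra of End(ℤ[x₁,...,x_m]) generated by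
the multiplication operators x_a and the divided difference operators ∂_a, an
element z ∈ NH_m is central if and only if z is multiplication by a symmetric
polynomial. -/
theorem nilHecke_center_symmetric (m : ℕ)
    (Dd : ℕ → Module.End ℤ (MvPolynomial (Fin m) ℤ))
    (hDd : ∀ (a : ℕ) (h : a + 1 < m) (f : MvPolynomial (Fin m) ℤ),
      (X (⟨a, Nat.lt_of_succ_lt h⟩ : Fin m) - X ⟨a + 1, h⟩) * Dd a f
        = f - rename (Equiv.swap (⟨a, Nat.lt_of_succ_lt h⟩ : Fin m) ⟨a + 1, h⟩) f) :
    let NH : Subalgebra ℤ (Module.End ℤ (MvPolynomial (Fin m) ℤ)) :=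
      Algebra.adjoin ℤ
        ((Set.range fun a : Fin m =>
            (LinearMap.mulLeft ℤ (X a) : Module.End ℤ (MvPolynomial (Fin m) ℤ))) ∪
         (Dd '' {a | a + 1 < m}))
    ∀ z ∈ NH, ((∀ w ∈ NH, z * w = w * z) ↔
      ∃ p : MvPolynomial (Fin m) ℤ,
        (∀ σ : Equiv.Perm (Fin m), rename σ p = p) ∧
        z = (LinearMap.mulLeft ℤ p : Module.End ℤ (MvPolynomial (Fin m) ℤ))) := by
  intro NH z _
  have hX (i : Fin m) : LinearMap.mulLeft ℤ (X i) ∈ NH :=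
    Algebra.subset_adjoin (Or.inl ⟨i, rfl⟩)
  have hD (a : ℕ) (ha : a + 1 < m) : Dd a ∈ NH :=
    Algebra.subset_adjoin (Or.inr ⟨a, ha, rfl⟩)
  have hswap (a : ℕ) (ha : a + 1 < m) {p : MvPolynomial (Fin m) ℤ} :=
    commute_mulLeft_iff_rename_swap_eq_self (p := p) (Fin.ne_of_val_ne (by simp)) (hDd a ha)
  constructor
  · intro hcomm
    have hz : z = LinearMap.mulLeft ℤ (z 1) :=
      eq_mulLeft_of_commute_mulLeft_X z fun i => hcomm _ (hX i)
    refine ⟨z 1, isSymmetric_of_rename_swap_succ fun a ha => (hswap a ha).mp ?_, hz⟩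
    rw [← hz]
    exact hcomm _ (hD a ha)
  · rintro ⟨p, hp, rfl⟩ w hw
    refine Algebra.commute_of_mem_adjoin_of_forall_mem_commute hw ?_
    rintro _ (⟨i, rfl⟩ | ⟨a, ha, rfl⟩)
    · exact (Commute.all p (X i)).map (Algebra.lmul ℤ _)
    · exact (hswap a ha).mpr (hp _)
end

section
/- For the KLR algebra R(ν) with ν = i + j where i·j = −1 (two adjacent vertices), R(ν) is isomorphic to the subring of 2×2 matrices over ℤ[x₁,x₂] consisting of matrices whose lower-left entry is divisible by x₁+x₂; under this isomorphism the crossing from 1_{ij} to 1_{ji} maps to (x₁+x₂)E₂₁ and the crossing from 1_{ji} to 1_{ij} maps to E₁₂. -/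
noncomputable section

/-- Generators of the KLR algebra R(i+j) for two adjacent vertices i, j. -/
inductive KLRGen : Type
  | eij | eji        -- idempotents 1_{ij}, 1_{ji}
  | xij1 | xij2      -- dots on strands 1, 2 of 1_{ij}
  | xji1 | xji2      -- dots on strands 1, 2 of 1_{ji}
  | dij | dji        -- crossings ij → ji and ji → ij

open KLRGen FreeAlgebra

/-- The free ℤ-algebra on the generators. -/
abbrev KLRFree : Type := FreeAlgebra ℤ KLRGen

/-- Shorthand for a generator of the free algebra. -/
def g (a : KLRGen) : KLRFree := FreeAlgebra.ι ℤ a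

/-- Defining relations of R(i+j) for i·j = −1: as in the orthogonal case, except
that the double crossings equal the sum of the two dots. -/
inductive KLRRel : KLRFree → KLRFree → Prop
  | idem1 : KLRRel (g eij * g eij) (g eij)
  | idem2 : KLRRel (g eji * g eji) (g eji)
  | orth1 : KLRRel (g eij * g eji) 0
  | orth2 : KLRRel (g eji * g eij) 0
  | unit : KLRRel (g eij + g eji) 1
  | dotl1 : KLRRel (g eij * g xij1) (g xij1)
  | dotr1 : KLRRel (g xij1 * g eij) (g xij1)
  | dotl2 : KLRRel (g eij * g xij2) (g xij2)
  | dotr2 : KLRRel (g xij2 * g eij) (g xij2)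
  | dotl3 : KLRRel (g eji * g xji1) (g xji1)
  | dotr3 : KLRRel (g xji1 * g eji) (g xji1)
  | dotl4 : KLRRel (g eji * g xji2) (g xji2)
  | dotr4 : KLRRel (g xji2 * g eji) (g xji2)
  | crossl1 : KLRRel (g eji * g dij) (g dij)
  | crossr1 : KLRRel (g dij * g eij) (g dij)
  | crossl2 : KLRRel (g eij * g dji) (g dji)
  | crossr2 : KLRRel (g dji * g eji) (g dji)
  | double1 : KLRRel (g dji * g dij) (g xij1 + g xij2)   -- i·j = −1
  | double2 : KLRRel (g dij * g dji) (g xji1 + g xji2)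
  | dotcomm1 : KLRRel (g xij1 * g xij2) (g xij2 * g xij1)
  | dotcomm2 : KLRRel (g xji1 * g xji2) (g xji2 * g xji1)
  | slide1 : KLRRel (g dij * g xij1) (g xji2 * g dij)
  | slide2 : KLRRel (g dij * g xij2) (g xji1 * g dij)
  | slide3 : KLRRel (g dji * g xji1) (g xij2 * g dji)
  | slide4 : KLRRel (g dji * g xji2) (g xij1 * g dji)

/-- The KLR algebra R(i+j) for i·j = −1. -/
abbrev KLR : Type := RingQuot KLRRel

/-- The image of a generator in R(i+j). -/
def G (a : KLRGen) : KLR := RingQuot.mkAlgHom ℤ KLRRel (g a)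

open MvPolynomial Matrix

/-- The subring of 2×2 matrices over ℤ[x₁,x₂] whose lower-left entry is divisible
by x₁ + x₂. -/
def lowerDivSubring : Subring (Matrix (Fin 2) (Fin 2) (MvPolynomial (Fin 2) ℤ)) where
  carrier := {M | (X 0 + X 1 : MvPolynomial (Fin 2) ℤ) ∣ M 1 0}
  zero_mem' := by simp
  one_mem' := by
    simp [Matrix.one_apply]
  add_mem' := by
    intro a b ha hb
    exact dvd_add ha hb
  neg_mem' := by
    intro a ha
    exact (dvd_neg).2 ha
  mul_mem' := by
    intro a b ha hb
    have : (a * b) 1 0 = a 1 0 * b 0 0 + a 1 1 * b 1 0 := by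
      simp [Matrix.mul_apply, Fin.sum_univ_two]
    rw [Set.mem_setOf_eq, this]
    exact dvd_add (ha.mul_right _) (hb.mul_left _)

/-! Sending the generators to the given matrices respects the defining relations, so it defines
a ring map `R(i+j) → lowerDivSubring`. Every element of `R(i+j)` has the form
`1_{ij} a + δ' b + δ c + 1_{ji} d`, with polynomials `a, c` acting by the dots of `1_{ij}` and
`b, d` by those of `1_{ji}`: such elements include `1 = 1_{ij} + 1_{ji}` and are stable under
left multiplication by the generators, `δ'δ = x₁ + x₂` and `δδ' = x₁ + x₂` keeping the dots
in the coefficients. The image of this element is `!![a, b; (x₁ + x₂) c, d]`, which gives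
surjectivity, and injectivity because `x₁ + x₂` is a non-zero-divisor. -/

section CommutingEval

variable {R A : Type*} [CommRing R] [Ring A] [Algebra R A]

open scoped IsMulCommutative in
/-- `MvPolynomial.aeval` needs a commutative target, so we evaluate inside the commutative
subalgebra generated by `u` and `v`. -/
def evalCommuting (u v : A) (h : Commute u v) : MvPolynomial (Fin 2) R →ₐ[R] A :=
  haveI := Algebra.isMulCommutative_adjoin R (s := {u, v}) (by
    rintro a (rfl | rfl) b (rfl | rfl) <;> first | rfl | exact h.eq | exact h.symm.eq)
  (Algebra.adjoin R {u, v}).val.comp <| MvPolynomial.aeval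
    ![⟨u, Algebra.subset_adjoin (by simp)⟩, ⟨v, Algebra.subset_adjoin (by simp)⟩]

variable (u v : A) (h : Commute u v)

@[simp]
lemma evalCommuting_X_zero : evalCommuting (R := R) u v h (MvPolynomial.X 0) = u := by
  simp [evalCommuting]

@[simp]
lemma evalCommuting_X_one : evalCommuting (R := R) u v h (MvPolynomial.X 1) = v := by
  simp [evalCommuting]

end CommutingEval

lemma MvPolynomial.mul_algHom_eq_algHom_mul_of_X {R A σ : Type*} [CommRing R] [Ring A]
    [Algebra R A] (u : A) (f f' : MvPolynomial σ R →ₐ[R] A)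
    (h : ∀ i, u * f (X i) = f' (X i) * u) (p : MvPolynomial σ R) :
    u * f p = f' p * u := by
  induction p using MvPolynomial.induction_on with
  | C a => rw [← MvPolynomial.algebraMap_eq, AlgHom.commutes, AlgHom.commutes, Algebra.commutes]
  | add p q hp hq => rw [map_add, map_add, mul_add, add_mul, hp, hq]
  | mul_X p i hp => rw [map_mul, map_mul, ← mul_assoc, hp, mul_assoc, h i, ← mul_assoc]

lemma Matrix.single_mul_algHom_of_X {R σ n : Type*} [CommRing R] [Fintype n] [DecidableEq n]
    (i k : n) (c : MvPolynomial σ R) (w : MvPolynomial σ R →ₐ[R] Matrix n n (MvPolynomial σ R))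
    (hw : ∀ s, w (X s) = single k k (X s)) (p : MvPolynomial σ R) :
    single i k c * w p = single i k (c * p) := by
  induction p using MvPolynomial.induction_on with
  | C r =>
    rw [← MvPolynomial.algebraMap_eq, AlgHom.commutes, ← Algebra.commutes, ← Algebra.smul_def,
      smul_single, smul_eq_C_mul, mul_comm, MvPolynomial.algebraMap_eq]
  | add p q hp hq => rw [map_add, mul_add, hp, hq, mul_add, single_add]
  | mul_X p s hp => rw [map_mul, ← mul_assoc, hp, hw, single_mul_single_same, mul_assoc]

namespace KLR

local notation "Pol" => MvPolynomial (Fin 2) ℤ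

@[simp]
lemma mkAlgHom_g (a : KLRGen) : RingQuot.mkAlgHom ℤ KLRRel (g a) = G a := rfl

lemma eij_mul_eij : G eij * G eij = G eij := by simpa using RingQuot.mkAlgHom_rel ℤ KLRRel.idem1
lemma eji_mul_eji : G eji * G eji = G eji := by simpa using RingQuot.mkAlgHom_rel ℤ KLRRel.idem2
lemma eij_mul_eji : G eij * G eji = 0 := by simpa using RingQuot.mkAlgHom_rel ℤ KLRRel.orth1
lemma eji_mul_eij : G eji * G eij = 0 := by simpa using RingQuot.mkAlgHom_rel ℤ KLRRel.orth2
lemma eij_add_eji : G eij + G eji = 1 := by simpa using RingQuot.mkAlgHom_rel ℤ KLRRel.unit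
lemma eji_mul_dij : G eji * G dij = G dij := by
  simpa using RingQuot.mkAlgHom_rel ℤ KLRRel.crossl1
lemma dij_mul_eij : G dij * G eij = G dij := by
  simpa using RingQuot.mkAlgHom_rel ℤ KLRRel.crossr1
lemma eij_mul_dji : G eij * G dji = G dji := by
  simpa using RingQuot.mkAlgHom_rel ℤ KLRRel.crossl2
lemma dji_mul_eji : G dji * G eji = G dji := by
  simpa using RingQuot.mkAlgHom_rel ℤ KLRRel.crossr2

lemma eij_mul_xij1 : G eij * G xij1 = G xij1 := by
  simpa using RingQuot.mkAlgHom_rel ℤ KLRRel.dotl1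
lemma xij1_mul_eij : G xij1 * G eij = G xij1 := by
  simpa using RingQuot.mkAlgHom_rel ℤ KLRRel.dotr1
lemma eij_mul_xij2 : G eij * G xij2 = G xij2 := by
  simpa using RingQuot.mkAlgHom_rel ℤ KLRRel.dotl2
lemma xij2_mul_eij : G xij2 * G eij = G xij2 := by
  simpa using RingQuot.mkAlgHom_rel ℤ KLRRel.dotr2
lemma eji_mul_xji1 : G eji * G xji1 = G xji1 := by
  simpa using RingQuot.mkAlgHom_rel ℤ KLRRel.dotl3
lemma xji1_mul_eji : G xji1 * G eji = G xji1 := by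
  simpa using RingQuot.mkAlgHom_rel ℤ KLRRel.dotr3
lemma eji_mul_xji2 : G eji * G xji2 = G xji2 := by
  simpa using RingQuot.mkAlgHom_rel ℤ KLRRel.dotl4
lemma xji2_mul_eji : G xji2 * G eji = G xji2 := by
  simpa using RingQuot.mkAlgHom_rel ℤ KLRRel.dotr4
lemma xij1_mul_xij2 : G xij1 * G xij2 = G xij2 * G xij1 := by
  simpa using RingQuot.mkAlgHom_rel ℤ KLRRel.dotcomm1
lemma xji2_mul_xji1 : G xji2 * G xji1 = G xji1 * G xji2 := by
  simpa using (RingQuot.mkAlgHom_rel ℤ KLRRel.dotcomm2).symm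
lemma dij_mul_xij1 : G dij * G xij1 = G xji2 * G dij := by
  simpa using RingQuot.mkAlgHom_rel ℤ KLRRel.slide1
lemma dij_mul_xij2 : G dij * G xij2 = G xji1 * G dij := by
  simpa using RingQuot.mkAlgHom_rel ℤ KLRRel.slide2
lemma dji_mul_xji1 : G dji * G xji1 = G xij2 * G dji := by
  simpa using RingQuot.mkAlgHom_rel ℤ KLRRel.slide3
lemma dji_mul_xji2 : G dji * G xji2 = G xij1 * G dji := by
  simpa using RingQuot.mkAlgHom_rel ℤ KLRRel.slide4
lemma dji_mul_dij : G dji * G dij = G xij1 + G xij2 := by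
  simpa using RingQuot.mkAlgHom_rel ℤ KLRRel.double1
lemma dij_mul_dji : G dij * G dji = G xji1 + G xji2 := by
  simpa using RingQuot.mkAlgHom_rel ℤ KLRRel.double2

lemma eij_mul_dij : G eij * G dij = 0 := by
  rw [← eji_mul_dij, ← mul_assoc, eij_mul_eji, zero_mul]
lemma eji_mul_dji : G eji * G dji = 0 := by
  rw [← eij_mul_dji, ← mul_assoc, eji_mul_eij, zero_mul]
lemma dij_mul_eji : G dij * G eji = 0 := by
  rw [← dij_mul_eij, mul_assoc, eij_mul_eji, mul_zero]
lemma dji_mul_eij : G dji * G eij = 0 := by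
  rw [← dji_mul_eji, mul_assoc, eji_mul_eij, mul_zero]
lemma dij_mul_dij : G dij * G dij = 0 := by
  calc G dij * G dij = G dij * (G eji * G dij) := by rw [eji_mul_dij]
    _ = 0 := by rw [← mul_assoc, dij_mul_eji, zero_mul]
lemma dji_mul_dji : G dji * G dji = 0 := by
  calc G dji * G dji = G dji * (G eij * G dji) := by rw [eij_mul_dji]
    _ = 0 := by rw [← mul_assoc, dji_mul_eij, zero_mul]

def dotsIJ : Pol →ₐ[ℤ] KLR :=
  evalCommuting (G xij1) (G xij2) xij1_mul_xij2

/-- The dots of `1_{ji}` in swapped order, because the crossing `δ` exchanges the strands: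
`δ x_{ij,1} = x_{ji,2} δ`. -/
def dotsJI : Pol →ₐ[ℤ] KLR :=
  evalCommuting (G xji2) (G xji1) xji2_mul_xji1

@[simp] lemma dotsIJ_X_zero : dotsIJ (X 0) = G xij1 := evalCommuting_X_zero ..
@[simp] lemma dotsIJ_X_one : dotsIJ (X 1) = G xij2 := evalCommuting_X_one ..
@[simp] lemma dotsJI_X_zero : dotsJI (X 0) = G xji2 := evalCommuting_X_zero ..
@[simp] lemma dotsJI_X_one : dotsJI (X 1) = G xji1 := evalCommuting_X_one ..

lemma eij_mul_dotsIJ (p : Pol) : G eij * dotsIJ p = dotsIJ p * G eij :=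
  MvPolynomial.mul_algHom_eq_algHom_mul_of_X _ _ _ (fun i => by
    fin_cases i <;> simp [eij_mul_xij1, xij1_mul_eij, eij_mul_xij2, xij2_mul_eij]) p

lemma eji_mul_dotsJI (p : Pol) : G eji * dotsJI p = dotsJI p * G eji :=
  MvPolynomial.mul_algHom_eq_algHom_mul_of_X _ _ _ (fun i => by
    fin_cases i <;> simp [eji_mul_xji1, xji1_mul_eji, eji_mul_xji2, xji2_mul_eji]) p

lemma dij_mul_dotsIJ (p : Pol) : G dij * dotsIJ p = dotsJI p * G dij :=
  MvPolynomial.mul_algHom_eq_algHom_mul_of_X _ _ _ (fun i => by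
    fin_cases i <;> simp [dij_mul_xij1, dij_mul_xij2]) p

lemma dji_mul_dotsJI (p : Pol) : G dji * dotsJI p = dotsIJ p * G dji :=
  MvPolynomial.mul_algHom_eq_algHom_mul_of_X _ _ _ (fun i => by
    fin_cases i <;> simp [dji_mul_xji1, dji_mul_xji2]) p

lemma dji_mul_dij_eq_eij_mul_dotsIJ : G dji * G dij = G eij * dotsIJ (X 0 + X 1) := by
  simp [dji_mul_dij, mul_add, eij_mul_xij1, eij_mul_xij2]

lemma dij_mul_dji_eq_eji_mul_dotsJI : G dij * G dji = G eji * dotsJI (X 0 + X 1) := by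
  simp [dij_mul_dji, mul_add, eji_mul_xji1, eji_mul_xji2, add_comm]

def ofEntries (a b c d : Pol) : KLR :=
  G eij * dotsIJ a + G dji * dotsJI b + G dij * dotsIJ c + G eji * dotsJI d

lemma ofEntries_add (a b c d a' b' c' d' : Pol) :
    ofEntries a b c d + ofEntries a' b' c' d' = ofEntries (a + a') (b + b') (c + c') (d + d') := by
  simp only [ofEntries, map_add, mul_add]
  abel

lemma intCast_mul_ofEntries (r : ℤ) (a b c d : Pol) :
    (r : KLR) * ofEntries a b c d = ofEntries (r * a) (r * b) (r * c) (r * d) := by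
  simp only [ofEntries, mul_add, map_mul, map_intCast, ← mul_assoc]
  simp only [Int.cast_comm r]

lemma ofEntries_one_zero_zero_one : ofEntries 1 0 0 1 = 1 := by
  simp [ofEntries, eij_add_eji]

lemma eij_dotsIJ_mul_ofEntries (p a b c d : Pol) :
    G eij * dotsIJ p * ofEntries a b c d = ofEntries (p * a) (p * b) 0 0 := by
  have h₁ : G eij * dotsIJ p * G eij = G eij * dotsIJ p := by
    rw [mul_assoc, ← eij_mul_dotsIJ, ← mul_assoc, eij_mul_eij]
  have h₂ : G eij * dotsIJ p * G dji = G dji * dotsJI p := by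
    rw [mul_assoc, ← dji_mul_dotsJI, ← mul_assoc, eij_mul_dji]
  have h₃ : G eij * dotsIJ p * G dij = 0 := by
    rw [eij_mul_dotsIJ, mul_assoc, eij_mul_dij, mul_zero]
  have h₄ : G eij * dotsIJ p * G eji = 0 := by
    rw [eij_mul_dotsIJ, mul_assoc, eij_mul_eji, mul_zero]
  simp only [ofEntries, mul_add, ← mul_assoc, h₁, h₂, h₃, h₄, map_mul, map_zero, zero_mul,
    mul_zero, add_zero]

lemma eji_dotsJI_mul_ofEntries (p a b c d : Pol) :
    G eji * dotsJI p * ofEntries a b c d = ofEntries 0 0 (p * c) (p * d) := by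
  have h₁ : G eji * dotsJI p * G eij = 0 := by
    rw [eji_mul_dotsJI, mul_assoc, eji_mul_eij, mul_zero]
  have h₂ : G eji * dotsJI p * G dji = 0 := by
    rw [eji_mul_dotsJI, mul_assoc, eji_mul_dji, mul_zero]
  have h₃ : G eji * dotsJI p * G dij = G dij * dotsIJ p := by
    rw [mul_assoc, ← dij_mul_dotsIJ, ← mul_assoc, eji_mul_dij]
  have h₄ : G eji * dotsJI p * G eji = G eji * dotsJI p := by
    rw [mul_assoc, ← eji_mul_dotsJI, ← mul_assoc, eji_mul_eji]
  simp only [ofEntries, mul_add, ← mul_assoc, h₁, h₂, h₃, h₄, map_mul, map_zero, zero_mul,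
    mul_zero, zero_add]

lemma dij_mul_ofEntries (a b c d : Pol) :
    G dij * ofEntries a b c d = ofEntries 0 0 a ((X 0 + X 1) * b) := by
  simp only [ofEntries, mul_add, ← mul_assoc, dij_mul_eij, dij_mul_dji_eq_eji_mul_dotsJI, dij_mul_dij,
    dij_mul_eji, map_mul, map_zero, zero_mul, mul_zero, add_zero, zero_add]

lemma dji_mul_ofEntries (a b c d : Pol) :
    G dji * ofEntries a b c d = ofEntries ((X 0 + X 1) * c) d 0 0 := by
  simp only [ofEntries, mul_add, ← mul_assoc, dji_mul_eij, dji_mul_dij_eq_eij_mul_dotsIJ, dji_mul_dji,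
    dji_mul_eji, map_mul, map_zero, zero_mul, mul_zero, add_zero, zero_add]

lemma G_mul_ofEntries (x : KLRGen) (a b c d : Pol) :
    ∃ a' b' c' d', G x * ofEntries a b c d = ofEntries a' b' c' d' := by
  cases x
  · exact ⟨_, _, _, _, by simpa using eij_dotsIJ_mul_ofEntries 1 a b c d⟩
  · exact ⟨_, _, _, _, by simpa using eji_dotsJI_mul_ofEntries 1 a b c d⟩
  · exact ⟨_, _, _, _, by simpa [eij_mul_xij1] using eij_dotsIJ_mul_ofEntries (X 0) a b c d⟩
  · exact ⟨_, _, _, _, by simpa [eij_mul_xij2] using eij_dotsIJ_mul_ofEntries (X 1) a b c d⟩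
  · exact ⟨_, _, _, _, by simpa [eji_mul_xji1] using eji_dotsJI_mul_ofEntries (X 1) a b c d⟩
  · exact ⟨_, _, _, _, by simpa [eji_mul_xji2] using eji_dotsJI_mul_ofEntries (X 0) a b c d⟩
  · exact ⟨_, _, _, _, dij_mul_ofEntries a b c d⟩
  · exact ⟨_, _, _, _, dji_mul_ofEntries a b c d⟩

lemma exists_eq_ofEntries (x : KLR) : ∃ a b c d, x = ofEntries a b c d := by
  suffices h : ∀ (y : KLRFree) (a b c d : Pol), ∃ a' b' c' d',
      RingQuot.mkAlgHom ℤ KLRRel y * ofEntries a b c d = ofEntries a' b' c' d' by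
    obtain ⟨y, rfl⟩ := RingQuot.mkAlgHom_surjective ℤ KLRRel x
    obtain ⟨a, b, c, d, h⟩ := h y 1 0 0 1
    exact ⟨a, b, c, d, by rw [← h, ofEntries_one_zero_zero_one, mul_one]⟩
  intro y
  induction y using FreeAlgebra.induction with
  | grade0 r =>
    intro a b c d
    exact ⟨_, _, _, _, by rw [AlgHom.commutes, eq_intCast, intCast_mul_ofEntries]⟩
  | grade1 x => exact G_mul_ofEntries x
  | mul y z hy hz =>
    intro a b c d
    obtain ⟨a', b', c', d', hz⟩ := hz a b c d
    obtain ⟨a'', b'', c'', d'', hy⟩ := hy a' b' c' d'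
    exact ⟨a'', b'', c'', d'', by rw [map_mul, mul_assoc, hz, hy]⟩
  | add y z hy hz =>
    intro a b c d
    obtain ⟨a', b', c', d', hy⟩ := hy a b c d
    obtain ⟨a'', b'', c'', d'', hz⟩ := hz a b c d
    exact ⟨_, _, _, _, by rw [map_add, add_mul, hy, hz, ofEntries_add]⟩

lemma mem_lowerDivSubring_iff {M : Matrix (Fin 2) (Fin 2) Pol} :
    M ∈ lowerDivSubring ↔ X 0 + X 1 ∣ M 1 0 := Iff.rfl

def genMatrix : KLRGen → lowerDivSubring
  | eij => ⟨single 0 0 1, by simp [mem_lowerDivSubring_iff]⟩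
  | eji => ⟨single 1 1 1, by simp [mem_lowerDivSubring_iff]⟩
  | xij1 => ⟨single 0 0 (X 0), by simp [mem_lowerDivSubring_iff]⟩
  | xij2 => ⟨single 0 0 (X 1), by simp [mem_lowerDivSubring_iff]⟩
  | xji1 => ⟨single 1 1 (X 1), by simp [mem_lowerDivSubring_iff]⟩
  | xji2 => ⟨single 1 1 (X 0), by simp [mem_lowerDivSubring_iff]⟩
  | dij => ⟨single 1 0 (X 0 + X 1), by simp [mem_lowerDivSubring_iff]⟩
  | dji => ⟨single 0 1 1, by simp [mem_lowerDivSubring_iff]⟩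

lemma lift_genMatrix_respects_rel ⦃x y : KLRFree⦄ (h : KLRRel x y) :
    FreeAlgebra.lift ℤ genMatrix x = FreeAlgebra.lift ℤ genMatrix y := by
  cases h <;>
  · apply Subtype.ext
    ext i j : 1
    fin_cases i <;> fin_cases j <;> simp [g, genMatrix] <;> ring

def toMatrix : KLR →ₐ[ℤ] lowerDivSubring :=
  RingQuot.liftAlgHom ℤ ⟨FreeAlgebra.lift ℤ genMatrix, lift_genMatrix_respects_rel⟩

lemma toMatrix_G (x : KLRGen) : toMatrix (G x) = genMatrix x := by
  rw [G, toMatrix, RingQuot.liftAlgHom_mkAlgHom_apply]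
  exact FreeAlgebra.lift_ι_apply _ _

lemma coe_toMatrix_dotsIJ_X (s : Fin 2) :
    (toMatrix (dotsIJ (X s)) : Matrix (Fin 2) (Fin 2) Pol) = single 0 0 (X s) := by
  fin_cases s <;> simp [toMatrix_G, genMatrix]

lemma coe_toMatrix_dotsJI_X (s : Fin 2) :
    (toMatrix (dotsJI (X s)) : Matrix (Fin 2) (Fin 2) Pol) = single 1 1 (X s) := by
  fin_cases s <;> simp [toMatrix_G, genMatrix]

lemma coe_toMatrix_G_mul_dotsIJ {x : KLRGen} {i : Fin 2} {c : Pol}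
    (hx : (genMatrix x : Matrix (Fin 2) (Fin 2) Pol) = single i 0 c) (p : Pol) :
    (toMatrix (G x * dotsIJ p) : Matrix (Fin 2) (Fin 2) Pol) = single i 0 (c * p) := by
  rw [map_mul, Subring.coe_mul, toMatrix_G, hx]
  exact single_mul_algHom_of_X i 0 c (lowerDivSubring.subtype.toIntAlgHom.comp
    (toMatrix.comp dotsIJ)) coe_toMatrix_dotsIJ_X p

lemma coe_toMatrix_G_mul_dotsJI {x : KLRGen} {i : Fin 2} {c : Pol}
    (hx : (genMatrix x : Matrix (Fin 2) (Fin 2) Pol) = single i 1 c) (p : Pol) :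
    (toMatrix (G x * dotsJI p) : Matrix (Fin 2) (Fin 2) Pol) = single i 1 (c * p) := by
  rw [map_mul, Subring.coe_mul, toMatrix_G, hx]
  exact single_mul_algHom_of_X i 1 c (lowerDivSubring.subtype.toIntAlgHom.comp
    (toMatrix.comp dotsJI)) coe_toMatrix_dotsJI_X p

lemma coe_toMatrix_ofEntries (a b c d : Pol) :
    (toMatrix (ofEntries a b c d) : Matrix (Fin 2) (Fin 2) Pol) =
      !![a, b; (X 0 + X 1) * c, d] := by
  simp only [ofEntries, map_add, Subring.coe_add, coe_toMatrix_G_mul_dotsIJ (x := eij) rfl,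
    coe_toMatrix_G_mul_dotsIJ (x := dij) rfl, coe_toMatrix_G_mul_dotsJI (x := dji) rfl,
    coe_toMatrix_G_mul_dotsJI (x := eji) rfl, one_mul]
  ext i j
  fin_cases i <;> fin_cases j <;> simp

lemma X_zero_add_X_one_ne_zero : (X 0 + X 1 : Pol) ≠ 0 := fun h => by
  simpa using congrArg (eval fun _ => 1) h

lemma toMatrix_injective : Function.Injective toMatrix := by
  intro x y hxy
  obtain ⟨a, b, c, d, rfl⟩ := exists_eq_ofEntries x
  obtain ⟨a', b', c', d', rfl⟩ := exists_eq_ofEntries y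
  have h := congrArg Subtype.val hxy
  rw [coe_toMatrix_ofEntries, coe_toMatrix_ofEntries] at h
  have hc : c = c' := mul_left_cancel₀ X_zero_add_X_one_ne_zero (by simpa using congrFun₂ h 1 0)
  rw [show a = a' by simpa using congrFun₂ h 0 0, show b = b' by simpa using congrFun₂ h 0 1,
    show d = d' by simpa using congrFun₂ h 1 1, hc]

lemma toMatrix_surjective : Function.Surjective toMatrix := by
  rintro ⟨M, c, hc⟩
  refine ⟨ofEntries (M 0 0) (M 0 1) c (M 1 1), Subtype.ext ?_⟩
  rw [coe_toMatrix_ofEntries, ← hc]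
  ext i j
  fin_cases i <;> fin_cases j <;> rfl

end KLR

/-- for two adjacent vertices i, j (i·j = −1), the KLR algebra R(i+j)
is isomorphic to the subring of 2×2 matrices over ℤ[x₁,x₂] whose lower-left entry
is divisible by x₁+x₂; the crossing 1_{ij} → 1_{ji} maps to (x₁+x₂)E₂₁ and the
crossing 1_{ji} → 1_{ij} maps to E₁₂, with idempotents and dots mapping as in the
orthogonal case. -/
theorem klr_iso_matrix_adjacent_case :
    ∃ φ : KLR ≃+* lowerDivSubring,
      (φ (G eij) : Matrix (Fin 2) (Fin 2) (MvPolynomial (Fin 2) ℤ))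
          = single 0 0 1 ∧
      (φ (G eji) : Matrix (Fin 2) (Fin 2) (MvPolynomial (Fin 2) ℤ))
          = single 1 1 1 ∧
      (φ (G dij) : Matrix (Fin 2) (Fin 2) (MvPolynomial (Fin 2) ℤ))
          = single 1 0 (X 0 + X 1) ∧
      (φ (G dji) : Matrix (Fin 2) (Fin 2) (MvPolynomial (Fin 2) ℤ))
          = single 0 1 1 ∧
      (φ (G xij1) : Matrix (Fin 2) (Fin 2) (MvPolynomial (Fin 2) ℤ))
          = single 0 0 (X 0) ∧
      (φ (G xij2) : Matrix (Fin 2) (Fin 2) (MvPolynomial (Fin 2) ℤ))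
          = single 0 0 (X 1) ∧
      (φ (G xji1) : Matrix (Fin 2) (Fin 2) (MvPolynomial (Fin 2) ℤ))
          = single 1 1 (X 1) ∧
      (φ (G xji2) : Matrix (Fin 2) (Fin 2) (MvPolynomial (Fin 2) ℤ))
          = single 1 1 (X 0) := by
  refine ⟨RingEquiv.ofBijective KLR.toMatrix ⟨KLR.toMatrix_injective, KLR.toMatrix_surjective⟩,
    ?_, ?_, ?_, ?_, ?_, ?_, ?_, ?_⟩ <;>
  exact congrArg Subtype.val (KLR.toMatrix_G _)

end
end
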